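/- Let H be a cocommutative Hopf algebra over a commutative ring k with antipode S. Then S is a Rota-Baxter operator on H: S is a coalgebra homomorphism and, in Sweedler notation, S(a)S(b) = S(a₍₁₎ S(a₍₂₎) b S(S(a₍₃₎))) for all a, b ∈ H. -/

import Mathlib

/-!
In the convolution monoid `Hom(A, A ⊗ A)` the map `δ ∘ S` is a right inverse of `δ`. For
cocommutative `A`, `δ` is a coalgebra map, so convolution of maps of the form `(f ⊗ g) ∘ δ` is
computed factorwise; hence `(S ⊗ S) ∘ δ` is a left inverse of `δ`, and the two inverses agree.
Similarly cocommutativity lets one swap the Sweedler legs in `S(a₂ S(a₁)) = ε(a)`, which makes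
`S ∘ S` a left inverse of `S` in `End(A)`, so `S² = id`.

In any Hopf algebra, coassociativity and `a₁ S(a₂) = ε(a)` give `a₁ S(a₂) b S²(a₃) = b S²(a)`.
When `S² = id` this is `b a`, and `S(b a) = S(a) S(b)`.
-/

open scoped TensorProduct

universe u v

section RBDef
variable (k : Type u) (A : Type v) [CommRing k] [Semiring A] [HopfAlgebra k A]

/-- In Sweedler notation, the linear map `a ⊗ b ↦ a₍₁₎ S(a₍₂₎) b S(S(a₍₃₎))`,
where `S` is the antipode. -/
noncomputable def rbRHS : A ⊗[k] A →ₗ[k] A :=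
  (LinearMap.mul' k A) ∘ₗ
  (TensorProduct.map LinearMap.id (LinearMap.mul' k A)) ∘ₗ
  (TensorProduct.map LinearMap.id
    (TensorProduct.map LinearMap.id (LinearMap.mul' k A))) ∘ₗ
  (TensorProduct.map LinearMap.id
    (TensorProduct.map LinearMap.id (TensorProduct.comm k A A).toLinearMap)) ∘ₗ
  (TensorProduct.map LinearMap.id (TensorProduct.assoc k A A A).toLinearMap) ∘ₗ
  (TensorProduct.assoc k A (A ⊗[k] A) A).toLinearMap ∘ₗ
  (TensorProduct.map
    ((TensorProduct.map LinearMap.id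
        (TensorProduct.map (HopfAlgebra.antipode (R := k))
          ((HopfAlgebra.antipode (R := k)) ∘ₗ (HopfAlgebra.antipode (R := k))))) ∘ₗ
      (TensorProduct.map LinearMap.id (Coalgebra.comul (R := k))) ∘ₗ
      (Coalgebra.comul (R := k)))
    LinearMap.id)

end RBDef

namespace LinearMap

open Coalgebra TensorProduct WithConv

variable {R A B C : Type*} [CommSemiring R] [Semiring A] [Algebra R A] [Semiring B] [Algebra R B]
  [AddCommMonoid C] [Module R C] [Coalgebra R C]

lemma map_convOne_comp_comul :
    map (1 : WithConv (C →ₗ[R] A)).ofConv (1 : WithConv (C →ₗ[R] B)).ofConv ∘ₗ comul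
      = (1 : WithConv (C →ₗ[R] A ⊗[R] B)).ofConv := by
  ext c
  calc _ = ∑ i ∈ (ℛ R c).index,
        counit (R := R) (counit (R := R) ((ℛ R c).left i) • (ℛ R c).right i) • (1 : A ⊗[R] B) := by
        simp [← (ℛ R c).eq, Algebra.algebraMap_eq_smul_one, ← smul_tmul', smul_smul, mul_comm,
          Algebra.TensorProduct.one_def]
    _ = counit (R := R) c • 1 := by rw [← Finset.sum_smul, ← map_sum, sum_counit_smul]
    _ = _ := by simp [Algebra.algebraMap_eq_smul_one]

lemma map_comp_comul_convMul [IsCocomm R C] (f g : WithConv (C →ₗ[R] A))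
    (f' g' : WithConv (C →ₗ[R] B)) :
    toConv (map f.ofConv f'.ofConv ∘ₗ comul) * toConv (map g.ofConv g'.ofConv ∘ₗ comul)
      = toConv (map (f * g).ofConv (f' * g').ofConv ∘ₗ comul) := by
  have := convMul_comp_coalgHom_distrib (toConv (map f.ofConv f'.ofConv))
    (toConv (map g.ofConv g'.ofConv)) (comulCoalgHom R C)
  rw [map_convMul_map] at this
  exact congr(toConv $this).symm

end LinearMap

namespace Coalgebra.Repr

variable {R C ι : Type*} [CommSemiring R] [AddCommMonoid C] [Module R C] [Coalgebra R C]
  [IsCocomm R C] {c : C}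

def swap (𝓡 : Repr R c ι) : Repr R c ι where
  index := 𝓡.index
  left := 𝓡.right
  right := 𝓡.left
  eq := by rw [← comm_comul R c, ← 𝓡.eq]; simp [map_sum]

end Coalgebra.Repr

namespace HopfAlgebra

open Coalgebra TensorProduct WithConv

section Cocomm

variable {k A : Type*} [CommSemiring k] [Semiring A] [HopfAlgebra k A] [IsCocomm k A]

lemma antipode_comp_antipode : antipode k ∘ₗ antipode k = (LinearMap.id : A →ₗ[k] A) := by
  have h : toConv (antipode k ∘ₗ antipode k : A →ₗ[k] A) * toConv (antipode k) = 1 := by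
    ext a
    have hswap : ∑ i ∈ (ℛ k a).index, (ℛ k a).right i * antipode k ((ℛ k a).left i)
        = counit a • 1 := sum_mul_antipode_eq_smul (ℛ k a).swap
    rw [(ℛ k a).convMul_apply]
    simp [← antipode_mul_antidistrib, ← map_sum, hswap, Algebra.algebraMap_eq_smul_one]
  exact congr(ofConv $(left_inv_eq_right_inv h LinearMap.antipode_mul_id))

@[simp]
lemma antipode_antipode (a : A) : antipode k (antipode k a) = a :=
  congr($antipode_comp_antipode a)

lemma comul_comp_antipode :
    comul ∘ₗ antipode k = map (antipode k) (antipode k) ∘ₗ (comul : A →ₗ[k] A ⊗[k] A) := by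
  have h : toConv (map (antipode k) (antipode k) ∘ₗ (comul : A →ₗ[k] A ⊗[k] A))
      * toConv comul = 1 := by
    have := LinearMap.map_comp_comul_convMul (toConv (antipode k)) (toConv LinearMap.id)
      (toConv (antipode k)) (toConv (LinearMap.id : A →ₗ[k] A))
    rw [LinearMap.antipode_mul_id, LinearMap.map_convOne_comp_comul] at this
    simpa using this
  exact congr(ofConv $(left_inv_eq_right_inv h LinearMap.comul_right_inv)).symm

end Cocomm

variable {k A : Type*} [CommRing k] [Semiring A] [HopfAlgebra k A]

lemma rbRHS_tmul (a b : A) : rbRHS k A (a ⊗ₜ b) = b * antipode k (antipode k a) := by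
  let Ψ : A ⊗[k] (A ⊗[k] A) →ₗ[k] A := LinearMap.mul' k A ∘ₗ map LinearMap.id
    (LinearMap.mul' k A ∘ₗ map (antipode k) (LinearMap.mulLeft k b ∘ₗ antipode k ∘ₗ antipode k))
  calc rbRHS k A (a ⊗ₜ b)
      = Ψ (∑ i ∈ (ℛ k a).index, ∑ j ∈ (ℛ k ((ℛ k a).right i)).index,
          (ℛ k a).left i ⊗ₜ ((ℛ k ((ℛ k a).right i)).left j ⊗ₜ (ℛ k ((ℛ k a).right i)).right j)) := by
        simp [rbRHS, Ψ, ← (ℛ k a).eq, map_sum, sum_tmul, ← (ℛ k _).eq, Finset.mul_sum]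
    _ = Ψ (∑ i ∈ (ℛ k a).index, ∑ j ∈ (ℛ k ((ℛ k a).left i)).index,
          (ℛ k ((ℛ k a).left i)).left j ⊗ₜ ((ℛ k ((ℛ k a).left i)).right j ⊗ₜ (ℛ k a).right i)) := by
        rw [sum_tmul_tmul_eq]
    _ = ∑ i ∈ (ℛ k a).index, counit (R := k) ((ℛ k a).left i) •
          (b * antipode k (antipode k ((ℛ k a).right i))) := by
        simp [Ψ, map_sum, ← mul_assoc, ← Finset.sum_mul, sum_mul_antipode_eq_smul]
    _ = b * antipode k (antipode k a) := by
        simp only [← mul_smul_comm, ← map_smul, ← Finset.mul_sum, ← map_sum, sum_counit_smul]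

end HopfAlgebra

variable (k : Type u) (A : Type v) [CommRing k] [Semiring A] [HopfAlgebra k A]

/-- The antipode `S` of a cocommutative Hopf algebra is a Rota-Baxter operator:
it is a coalgebra homomorphism and, in Sweedler notation,
`S(a)S(b) = S(a₍₁₎ S(a₍₂₎) b S(S(a₍₃₎)))` for all `a, b`. -/
theorem antipode_isRotaBaxter
    (hcc : ∀ a : A, TensorProduct.comm k A A (Coalgebra.comul (R := k) a)
      = Coalgebra.comul (R := k) a) :
    (∀ a : A, Coalgebra.comul (R := k) (HopfAlgebra.antipode (R := k) a)
        = TensorProduct.map (HopfAlgebra.antipode (R := k)) (HopfAlgebra.antipode (R := k))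
            (Coalgebra.comul (R := k) a)) ∧
    (∀ a : A, Coalgebra.counit (R := k) (HopfAlgebra.antipode (R := k) a)
        = Coalgebra.counit (R := k) a) ∧
    (∀ a b : A, HopfAlgebra.antipode (R := k) a * HopfAlgebra.antipode (R := k) b
        = HopfAlgebra.antipode (R := k) (rbRHS k A (a ⊗ₜ[k] b))) := by
  have : Coalgebra.IsCocomm k A := ⟨LinearMap.ext hcc⟩
  refine ⟨fun a ↦ congr($HopfAlgebra.comul_comp_antipode a), HopfAlgebra.counit_antipode,
    fun a b ↦ ?_⟩
  rw [HopfAlgebra.rbRHS_tmul, HopfAlgebra.antipode_mul_antidistrib,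
    HopfAlgebra.antipode_antipode]
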